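/- Let Ω be a bounded open set of ℝ^n with |Ω| > 0. Then ρ_{2,F}(Ω) ≤ (|Ω|/(2κ_n))^{1/n}; equivalently, Λ₂(∞,Ω) ≥ Λ₂(∞,𝒲̃), where 𝒲̃ is the union of two disjoint Wulff shapes each of measure |Ω|/2 (this is the Hong–Krahn–Szego inequality for the second eigenvalue of the anisotropic ∞-Laplacian). -/
import Mathlib


open MeasureTheory Set Filter
open scoped RealInnerProductSpace Topology

noncomputable section
open Classical

/-- `n`-dimensional Euclidean space. -/
abbrev En (n : ℕ) : Type := EuclideanSpace ℝ (Fin n)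

variable {n : ℕ}

/-- The first Dirichlet eigenvalue `λ₁(p,Ω)` of the anisotropic `p`-Laplacian:
the infimum of the Rayleigh quotient `∫_Ω F(∇φ)^p / ∫_Ω |φ|^p` over smooth
compactly supported test functions `φ ≢ 0` on `Ω`. -/
def lam1 (F : En n → ℝ) (p : ℝ) (Ω : Set (En n)) : ℝ :=
  sInf { r : ℝ | ∃ φ : En n → ℝ, ContDiff ℝ (⊤ : ℕ∞) φ ∧ HasCompactSupport φ ∧
      tsupport φ ⊆ Ω ∧ φ ≠ 0 ∧
      r = (∫ x in Ω, F (gradient φ x) ^ p) / (∫ x in Ω, |φ x| ^ p) }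

/-- `u` is an eigenfunction of the anisotropic `p`-Laplacian on `Ω` with
eigenvalue `lam`: it is `C¹` on `Ω`, continuous up to the boundary, vanishes on
`∂Ω`, is not identically zero, has `∫_Ω F(∇u)^p < ∞`, and satisfies the weak
Euler-Lagrange equation against all smooth compactly supported test functions.
(Note that `F(0) = 0` and `p > 1`, so `F(∇u)^{p-1} ∇_ξ F(∇u)` is interpreted
as `0` where `∇u = 0`, in accordance with the convention.) -/
def IsEigenfunction (F : En n → ℝ) (p : ℝ) (Ω : Set (En n)) (lam : ℝ)
    (u : En n → ℝ) : Prop :=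
  ContDiffOn ℝ 1 u Ω ∧ ContinuousOn u (closure Ω) ∧
  (∀ x ∈ frontier Ω, u x = 0) ∧ (∃ x ∈ Ω, u x ≠ 0) ∧
  IntegrableOn (fun x => F (gradient u x) ^ p) Ω ∧
  ∀ φ : En n → ℝ, ContDiff ℝ (⊤ : ℕ∞) φ → HasCompactSupport φ → tsupport φ ⊆ Ω →
    ∫ x in Ω, F (gradient u x) ^ (p - 1) * ⟪gradient F (gradient u x), gradient φ x⟫
      = lam * ∫ x in Ω, |u x| ^ (p - 2) * u x * φ x

/-- `lam` is an eigenvalue of the anisotropic `p`-Laplacian on `Ω`. -/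
def IsEigenvalue (F : En n → ℝ) (p : ℝ) (Ω : Set (En n)) (lam : ℝ) : Prop :=
  ∃ u, IsEigenfunction F p Ω lam u

/-- The first eigenvalue `λ₁(p,Ω)` is simple: any two eigenfunctions with
eigenvalue `λ₁(p,Ω)` are scalar multiples of each other (on `Ω`). -/
def IsSimple (F : En n → ℝ) (p : ℝ) (Ω : Set (En n)) : Prop :=
  ∀ u v, IsEigenfunction F p Ω (lam1 F p Ω) u → IsEigenfunction F p Ω (lam1 F p Ω) v →
    ∃ c : ℝ, ∀ x ∈ Ω, u x = c * v x

/-- The second Dirichlet eigenvalue `λ₂(p,Ω)`: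
`inf{λ > λ₁(p,Ω) : λ eigenvalue}` if `λ₁(p,Ω)` is simple, and `λ₁(p,Ω)` otherwise. -/
def lam2 (F : En n → ℝ) (p : ℝ) (Ω : Set (En n)) : ℝ :=
  if IsSimple F p Ω then sInf { lam | lam1 F p Ω < lam ∧ IsEigenvalue F p Ω lam }
  else lam1 F p Ω

/-- The Hessian of `G` is positive definite at every point of `ℝⁿ \ {0}`. -/
def HessPosDef (G : En n → ℝ) : Prop :=
  ∀ ξ : En n, ξ ≠ 0 → ∀ v : En n, v ≠ 0 → 0 < iteratedFDeriv ℝ 2 G ξ ![v, v]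

/-- The polar (dual) norm `F^o(v) = sup_{ξ ≠ 0} ⟨ξ,v⟩ / F(ξ)`. -/
def polar (F : En n → ℝ) (v : En n) : ℝ :=
  sSup { r : ℝ | ∃ ξ : En n, ξ ≠ 0 ∧ r = ⟪ξ, v⟫ / F ξ }

/-- The Wulff shape `𝒲 = {ξ : F^o(ξ) < 1}`. -/
def wulff (F : En n → ℝ) : Set (En n) := { ξ | polar F ξ < 1 }

/-- The Wulff shape of radius `r` centered at `x₀`: `𝒲_r(x₀) = r𝒲 + x₀`. -/
def wulffR (F : En n → ℝ) (r : ℝ) (x₀ : En n) : Set (En n) :=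
  (fun ξ => x₀ + r • ξ) '' wulff F

/-- `κ_n`, the Lebesgue measure of the Wulff shape. -/
def kappa (F : En n → ℝ) : ℝ := (volume (wulff F)).toReal

/-- The anisotropic distance to the boundary `d_F(x) = inf_{y ∈ ∂Ω} F^o(x - y)`. -/
def dF (F : En n → ℝ) (Ω : Set (En n)) (x : En n) : ℝ :=
  sInf { r : ℝ | ∃ y ∈ frontier Ω, r = polar F (x - y) }

/-- The anisotropic inradius `ρ_F(Ω) = sup_{x ∈ Ω} d_F(x)`. -/
def rhoF (F : En n → ℝ) (Ω : Set (En n)) : ℝ :=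
  sSup { r : ℝ | ∃ x ∈ Ω, r = dF F Ω x }

/-- `ρ_{2,F}(Ω)`: the supremum of radii `ρ > 0` such that two disjoint Wulff
shapes of radius `ρ` fit inside `Ω`. -/
def rho2F (F : En n → ℝ) (Ω : Set (En n)) : ℝ :=
  sSup { ρ : ℝ | 0 < ρ ∧ ∃ x₁ x₂ : En n, Disjoint (wulffR F ρ x₁) (wulffR F ρ x₂) ∧
      wulffR F ρ x₁ ⊆ Ω ∧ wulffR F ρ x₂ ⊆ Ω }


/-- `D` is a nodal domain of `u` on `Ω`: a connected component of
`{x ∈ Ω : u x > 0}` or of `{x ∈ Ω : u x < 0}`. -/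
def IsNodalDomain (Ω : Set (En n)) (u : En n → ℝ) (D : Set (En n)) : Prop :=
  (∃ x ∈ {y ∈ Ω | 0 < u y}, D = connectedComponentIn {y ∈ Ω | 0 < u y} x) ∨
  (∃ x ∈ {y ∈ Ω | u y < 0}, D = connectedComponentIn {y ∈ Ω | u y < 0} x)

/-- `J(ξ) = ½ ∇[F²](ξ)` for `ξ ≠ 0`, `J(0) = 0`. -/
def Jmap (F : En n → ℝ) (ξ : En n) : En n :=
  if ξ = 0 then 0 else (1 / 2 : ℝ) • gradient (fun η => F η ^ 2) ξ

/-- The operator `𝒜_Λ(s, ξ, ·)`, where `q` stands for `⟨X J(ξ), J(ξ)⟩`. -/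
def Aop (F : En n → ℝ) (Lam s : ℝ) (ξ : En n) (q : ℝ) : ℝ :=
  if 0 < s then min (F ξ - Lam * s) (-q)
  else if s = 0 then -q
  else max (-F ξ - Lam * s) (-q)

/-- Viscosity subsolution of `𝒜_Λ(u, ∇u, ∇²u) = 0` on `Ω`. -/
def ViscSubsol (F : En n → ℝ) (Lam : ℝ) (Ω : Set (En n)) (u : En n → ℝ) : Prop :=
  ∀ x ∈ Ω, ∀ φ : En n → ℝ, ContDiff ℝ 2 φ →
    IsLocalMax (fun y => u y - φ y) x → u x = φ x →
    Aop F Lam (φ x) (gradient φ x)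
      (iteratedFDeriv ℝ 2 φ x ![Jmap F (gradient φ x), Jmap F (gradient φ x)]) ≤ 0

/-- Viscosity supersolution of `𝒜_Λ(u, ∇u, ∇²u) = 0` on `Ω`. -/
def ViscSupersol (F : En n → ℝ) (Lam : ℝ) (Ω : Set (En n)) (u : En n → ℝ) : Prop :=
  ∀ x ∈ Ω, ∀ φ : En n → ℝ, ContDiff ℝ 2 φ →
    IsLocalMin (fun y => u y - φ y) x → u x = φ x →
    0 ≤ Aop F Lam (φ x) (gradient φ x)
      (iteratedFDeriv ℝ 2 φ x ![Jmap F (gradient φ x), Jmap F (gradient φ x)])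

/-- `Lam` is an eigenvalue of the anisotropic `∞`-Laplacian on `Ω`. -/
def IsInfEigenvalue (F : En n → ℝ) (Ω : Set (En n)) (Lam : ℝ) : Prop :=
  ∃ u : En n → ℝ, ContinuousOn u (closure Ω) ∧ (∀ x ∈ frontier Ω, u x = 0) ∧
    (∃ x ∈ Ω, u x ≠ 0) ∧ ViscSubsol F Lam Ω u ∧ ViscSupersol F Lam Ω u


section HKSAux
open scoped Pointwise

variable {n : ℕ}

lemma HKS.Fpos {F : En n → ℝ} {a : ℝ} (ha : 0 < a) (hFlow : ∀ ξ : En n, a * ‖ξ‖ ≤ F ξ)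
    {ξ : En n} (hξ : ξ ≠ 0) : 0 < F ξ :=
  lt_of_lt_of_le (by have := norm_pos_iff.2 hξ; positivity) (hFlow ξ)

lemma HKS.exists_unit (hn : 2 ≤ n) : ∃ ξ₀ : En n, ‖ξ₀‖ = 1 := by
  refine ⟨EuclideanSpace.single ⟨0, by omega⟩ 1, ?_⟩
  simp [EuclideanSpace.norm_single]

lemma HKS.polar_bddAbove {F : En n → ℝ} {a : ℝ} (ha : 0 < a)
    (hFlow : ∀ ξ : En n, a * ‖ξ‖ ≤ F ξ) (v : En n) :
    BddAbove { r : ℝ | ∃ ξ : En n, ξ ≠ 0 ∧ r = ⟪ξ, v⟫ / F ξ } := by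
  refine ⟨‖v‖ / a, ?_⟩
  rintro r ⟨ξ, hξ, rfl⟩
  have hF : 0 < F ξ := HKS.Fpos ha hFlow hξ
  rw [div_le_div_iff₀ hF ha]
  nlinarith [real_inner_le_norm ξ v, hFlow ξ, norm_nonneg v, norm_nonneg ξ]

lemma HKS.polar_nonempty (hn : 2 ≤ n) (F : En n → ℝ) (v : En n) :
    { r : ℝ | ∃ ξ : En n, ξ ≠ 0 ∧ r = ⟪ξ, v⟫ / F ξ }.Nonempty := by
  obtain ⟨ξ₀, hξ₀⟩ := HKS.exists_unit (n := n) hn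
  exact ⟨_, ξ₀, by simp [← norm_pos_iff, hξ₀], rfl⟩

lemma HKS.polar_le (hn : 2 ≤ n) {F : En n → ℝ} {a : ℝ} (ha : 0 < a)
    (hFlow : ∀ ξ : En n, a * ‖ξ‖ ≤ F ξ) (v : En n) : polar F v ≤ ‖v‖ / a := by
  refine csSup_le (HKS.polar_nonempty hn F v) ?_
  rintro r ⟨ξ, hξ, rfl⟩
  have hF : 0 < F ξ := HKS.Fpos ha hFlow hξ
  rw [div_le_div_iff₀ hF ha]
  nlinarith [real_inner_le_norm ξ v, hFlow ξ, norm_nonneg v, norm_nonneg ξ]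

lemma HKS.polar_lower {F : En n → ℝ} {a b : ℝ} (ha : 0 < a) (hab : a ≤ b)
    (hFlow : ∀ ξ : En n, a * ‖ξ‖ ≤ F ξ) (hFup : ∀ ξ : En n, F ξ ≤ b * ‖ξ‖)
    {v : En n} (hv : v ≠ 0) : ‖v‖ / b ≤ polar F v := by
  have hb : 0 < b := ha.trans_le hab
  have hF : 0 < F v := HKS.Fpos ha hFlow hv
  have h1 : ⟪v, v⟫ / F v ≤ polar F v :=
    le_csSup (HKS.polar_bddAbove ha hFlow v) ⟨v, hv, rfl⟩
  refine le_trans ?_ h1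
  rw [real_inner_self_eq_norm_sq, div_le_div_iff₀ hb hF]
  have hv' : 0 < ‖v‖ := norm_pos_iff.2 hv
  nlinarith [hFup v]

lemma HKS.polar_nonneg (hn : 2 ≤ n) {F : En n → ℝ} {a b : ℝ} (ha : 0 < a) (hab : a ≤ b)
    (hFlow : ∀ ξ : En n, a * ‖ξ‖ ≤ F ξ) (hFup : ∀ ξ : En n, F ξ ≤ b * ‖ξ‖)
    (v : En n) : 0 ≤ polar F v := by
  by_cases hv : v = 0
  · obtain ⟨ξ₀, hξ₀⟩ := HKS.exists_unit (n := n) hn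
    have h0 : (0:ℝ) = ⟪ξ₀, v⟫ / F ξ₀ := by simp [hv]
    exact le_csSup (HKS.polar_bddAbove ha hFlow v) ⟨ξ₀, by simp [← norm_pos_iff, hξ₀], h0⟩
  · have hb : 0 < b := ha.trans_le hab
    have hv' : 0 < ‖v‖ := norm_pos_iff.2 hv
    exact le_trans (by positivity) (HKS.polar_lower ha hab hFlow hFup hv)

lemma HKS.wulff_subset {F : En n → ℝ} {a b : ℝ} (ha : 0 < a) (hab : a ≤ b)
    (hFlow : ∀ ξ : En n, a * ‖ξ‖ ≤ F ξ) (hFup : ∀ ξ : En n, F ξ ≤ b * ‖ξ‖) :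
    wulff F ⊆ Metric.closedBall 0 b := by
  have hb : 0 < b := ha.trans_le hab
  intro ξ hξ
  rw [Metric.mem_closedBall, dist_zero_right]
  by_cases h0 : ξ = 0
  · simp [h0, hb.le]
  · have := (HKS.polar_lower ha hab hFlow hFup h0).trans_lt hξ
    rw [div_lt_one hb] at this
    exact this.le

lemma HKS.ball_subset_wulff (hn : 2 ≤ n) {F : En n → ℝ} {a : ℝ} (ha : 0 < a)
    (hFlow : ∀ ξ : En n, a * ‖ξ‖ ≤ F ξ) :
    Metric.ball 0 a ⊆ wulff F := by
  intro ξ hξ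
  rw [Metric.mem_ball, dist_zero_right] at hξ
  exact (HKS.polar_le hn ha hFlow ξ).trans_lt ((div_lt_one ha).2 hξ)

lemma HKS.wulff_convex (hn : 2 ≤ n) {F : En n → ℝ} {a b : ℝ} (ha : 0 < a) (hab : a ≤ b)
    (hFlow : ∀ ξ : En n, a * ‖ξ‖ ≤ F ξ) (hFup : ∀ ξ : En n, F ξ ≤ b * ‖ξ‖) :
    Convex ℝ (wulff F) := by
  intro x hx y hy t s ht hs hts
  have key : polar F (t • x + s • y) ≤ t * polar F x + s * polar F y := by
    refine csSup_le (HKS.polar_nonempty hn F _) ?_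
    rintro r ⟨ξ, hξ, rfl⟩
    have hF : 0 < F ξ := HKS.Fpos ha hFlow hξ
    have e : ⟪ξ, t • x + s • y⟫ / F ξ
        = t * (⟪ξ, x⟫ / F ξ) + s * (⟪ξ, y⟫ / F ξ) := by
      rw [inner_add_right, real_inner_smul_right, real_inner_smul_right, add_div,
        mul_div_assoc, mul_div_assoc]
    rw [e]
    have h1 : ⟪ξ, x⟫ / F ξ ≤ polar F x := le_csSup (HKS.polar_bddAbove ha hFlow x) ⟨ξ, hξ, rfl⟩
    have h2 : ⟪ξ, y⟫ / F ξ ≤ polar F y := le_csSup (HKS.polar_bddAbove ha hFlow y) ⟨ξ, hξ, rfl⟩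
    exact add_le_add (mul_le_mul_of_nonneg_left h1 ht) (mul_le_mul_of_nonneg_left h2 hs)
  rcases eq_or_lt_of_le ht with h0 | h0
  · have hs1 : s = 1 := by linarith
    simpa [← h0, hs1] using hy
  · have hx' : polar F x < 1 := hx
    have hy' : polar F y < 1 := hy
    have hny : 0 ≤ polar F y := HKS.polar_nonneg hn ha hab hFlow hFup y
    have hlt : t * polar F x + s * polar F y < t + s := by
      rcases eq_or_lt_of_le hs with h1 | h1
      · nlinarith
      · nlinarith
    calc polar F (t • x + s • y) ≤ t * polar F x + s * polar F y := key
      _ < t + s := hlt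
      _ = 1 := hts

open scoped Pointwise in
lemma HKS.wulffR_eq (F : En n → ℝ) (r : ℝ) (x₀ : En n) :
    wulffR F r x₀ = x₀ +ᵥ (r • wulff F) := by
  ext y
  simp only [wulffR, Set.mem_image, Set.mem_vadd_set, Set.mem_smul_set]
  constructor
  · rintro ⟨ξ, hξ, rfl⟩; exact ⟨r • ξ, ⟨ξ, hξ, rfl⟩, rfl⟩
  · rintro ⟨z, ⟨ξ, hξ, rfl⟩, rfl⟩; exact ⟨ξ, hξ, rfl⟩

lemma HKS.wulffR_volume (F : En n → ℝ) {r : ℝ} (hr : 0 ≤ r) (x₀ : En n) :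
    volume (wulffR F r x₀) = ENNReal.ofReal (r ^ n) * volume (wulff F) := by
  rw [HKS.wulffR_eq, measure_vadd, Measure.addHaar_smul, finrank_euclideanSpace_fin,
    abs_of_nonneg (pow_nonneg hr n)]

lemma HKS.wulffR_subset_ball {F : En n → ℝ} {b r : ℝ}
    (hW : wulff F ⊆ Metric.closedBall 0 b) (hr : 0 ≤ r) (x₀ : En n) :
    wulffR F r x₀ ⊆ Metric.closedBall x₀ (r * b) := by
  rintro y ⟨ξ, hξ, rfl⟩
  have hξb : ‖ξ‖ ≤ b := by simpa [dist_zero_right] using hW hξ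
  rw [Metric.mem_closedBall, dist_eq_norm]
  simp only [add_sub_cancel_left, norm_smul, Real.norm_eq_abs, abs_of_nonneg hr]
  exact mul_le_mul_of_nonneg_left hξb hr

open scoped Pointwise in
lemma HKS.wulffR_convex {F : En n → ℝ} (hW : Convex ℝ (wulff F)) (r : ℝ) (x₀ : En n) :
    Convex ℝ (wulffR F r x₀) := by
  rw [HKS.wulffR_eq]
  exact (hW.smul r).vadd x₀

end HKSAux

/-- The Hong-Krahn-Szego inequality for the second eigenvalue of the
anisotropic `∞`-Laplacian: `ρ_{2,F}(Ω) ≤ (|Ω|/(2κ_n))^(1/n)`, equivalently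
`Λ₂(∞,Ω) ≥ Λ₂(∞,𝒲̃)` for `𝒲̃` a union of two disjoint Wulff shapes each of
measure `|Ω|/2`. -/
theorem inf_laplacian_hong_krahn_szego {n : ℕ}
    (hn : 2 ≤ n) (F : En n → ℝ) (a b : ℝ)
    (hF0 : ∀ ξ : En n, 0 ≤ F ξ)
    (hFconv : ConvexOn ℝ Set.univ F)
    (hFhom : ∀ (t : ℝ) (ξ : En n), F (t • ξ) = |t| * F ξ)
    (ha : 0 < a) (hab : a ≤ b)
    (hFlow : ∀ ξ : En n, a * ‖ξ‖ ≤ F ξ) (hFup : ∀ ξ : En n, F ξ ≤ b * ‖ξ‖)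
    (Ω : Set (En n)) (hΩo : IsOpen Ω) (hΩb : Bornology.IsBounded Ω)
    (hΩvol : 0 < volume Ω) :
    rho2F F Ω ≤ ((volume Ω).toReal / (2 * kappa F)) ^ (1 / (n : ℝ)) ∧
    (∀ r : ℝ, 0 < r → ∀ x₁ x₂ : En n, Disjoint (wulffR F r x₁) (wulffR F r x₂) →
      (volume (wulffR F r x₁)).toReal = (volume Ω).toReal / 2 →
      (volume (wulffR F r x₂)).toReal = (volume Ω).toReal / 2 →
      1 / rho2F F (wulffR F r x₁ ∪ wulffR F r x₂) ≤ 1 / rho2F F Ω) := by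
  have hb : 0 < b := ha.trans_le hab
  have hWsub : wulff F ⊆ Metric.closedBall 0 b := HKS.wulff_subset ha hab hFlow hFup
  have hWball : Metric.ball (0 : En n) a ⊆ wulff F := HKS.ball_subset_wulff hn ha hFlow
  have hWconv : Convex ℝ (wulff F) := HKS.wulff_convex hn ha hab hFlow hFup
  have hWpos : 0 < volume (wulff F) :=
    lt_of_lt_of_le (Metric.measure_ball_pos volume 0 ha) (measure_mono hWball)
  have hWfin : volume (wulff F) ≠ ⊤ :=
    ((measure_mono hWsub).trans_lt measure_closedBall_lt_top).ne
  have hκ : 0 < kappa F := ENNReal.toReal_pos hWpos.ne' hWfin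
  have hΩfin : volume Ω ≠ ⊤ := hΩb.measure_lt_top.ne
  have hV : 0 < (volume Ω).toReal := ENNReal.toReal_pos hΩvol.ne' hΩfin
  have hn0 : (n : ℝ) ≠ 0 := Nat.cast_ne_zero.2 (by omega)
  have hk : kappa F = (volume (wulff F)).toReal := rfl
  -- the key volume bound
  have bound : ∀ U : Set (En n), volume U ≠ ⊤ → ∀ ρ : ℝ,
      (0 < ρ ∧ ∃ x₁ x₂ : En n, Disjoint (wulffR F ρ x₁) (wulffR F ρ x₂) ∧
        wulffR F ρ x₁ ⊆ U ∧ wulffR F ρ x₂ ⊆ U) →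
      ρ ≤ ((volume U).toReal / (2 * kappa F)) ^ (1 / (n : ℝ)) := by
    rintro U hU ρ ⟨hρ, x₁, x₂, hd, h1, h2⟩
    have hv1 : volume (wulffR F ρ x₁) = ENNReal.ofReal (ρ ^ n) * volume (wulff F) :=
      HKS.wulffR_volume F hρ.le x₁
    have hv2 : volume (wulffR F ρ x₂) = ENNReal.ofReal (ρ ^ n) * volume (wulff F) :=
      HKS.wulffR_volume F hρ.le x₂
    have hfin : ENNReal.ofReal (ρ ^ n) * volume (wulff F) ≠ ⊤ :=
      ENNReal.mul_ne_top ENNReal.ofReal_ne_top hWfin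
    have hmeas : volume (wulffR F ρ x₁ ∪ wulffR F ρ x₂) =
        volume (wulffR F ρ x₁) + volume (wulffR F ρ x₂) :=
      measure_union₀ ((HKS.wulffR_convex hWconv ρ x₂).nullMeasurableSet volume) hd.aedisjoint
    have hle : volume (wulffR F ρ x₁) + volume (wulffR F ρ x₂) ≤ volume U := by
      rw [← hmeas]; exact measure_mono (Set.union_subset h1 h2)
    have hreal : 2 * (ρ ^ n * kappa F) ≤ (volume U).toReal := by
      have h := (ENNReal.toReal_le_toReal
        (by rw [hv1, hv2]; exact ENNReal.add_ne_top.2 ⟨hfin, hfin⟩) hU).2 hle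
      rw [hv1, hv2, ENNReal.toReal_add hfin hfin, ENNReal.toReal_mul,
        ENNReal.toReal_ofReal (by positivity)] at h
      rw [hk]
      linarith
    have hpow : ρ ^ n ≤ (volume U).toReal / (2 * kappa F) := by
      rw [le_div_iff₀ (by positivity)]
      linarith
    calc ρ = (ρ ^ n) ^ (1 / (n : ℝ)) := by
          rw [← Real.rpow_natCast ρ n, ← Real.rpow_mul hρ.le, mul_one_div_cancel hn0,
            Real.rpow_one]
      _ ≤ ((volume U).toReal / (2 * kappa F)) ^ (1 / (n : ℝ)) :=
          Real.rpow_le_rpow (by positivity) hpow (by positivity)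
  have hbdd : ∀ U : Set (En n), volume U ≠ ⊤ →
      BddAbove {ρ : ℝ | 0 < ρ ∧ ∃ x₁ x₂ : En n,
        Disjoint (wulffR F ρ x₁) (wulffR F ρ x₂) ∧
        wulffR F ρ x₁ ⊆ U ∧ wulffR F ρ x₂ ⊆ U} :=
    fun U hU => ⟨_, fun ρ hρ => bound U hU ρ hρ⟩
  have part1 : rho2F F Ω ≤ ((volume Ω).toReal / (2 * kappa F)) ^ (1 / (n : ℝ)) :=
    Real.sSup_le (fun ρ hρ => bound Ω hΩfin ρ hρ) (by positivity)
  -- positivity of rho2F Ω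
  have hrho_pos : 0 < rho2F F Ω := by
    obtain ⟨x, hx⟩ := nonempty_of_measure_ne_zero hΩvol.ne'
    obtain ⟨ε, hε, hball⟩ := Metric.isOpen_iff.1 hΩo x hx
    obtain ⟨e, he⟩ := HKS.exists_unit (n := n) hn
    set ρ₀ := ε / (8 * b) with hρ₀def
    have hρ₀ : 0 < ρ₀ := by positivity
    have hρ₀b : ρ₀ * b = ε / 8 := by
      rw [hρ₀def]; field_simp
    set x₂ := x + (ε / 2) • e with hx₂def
    have hdist : dist x x₂ = ε / 2 := by
      rw [hx₂def, dist_self_add_right, norm_smul, he, mul_one, Real.norm_eq_abs,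
        abs_of_pos (by linarith)]
    have hsub1 : wulffR F ρ₀ x ⊆ Metric.closedBall x (ε / 8) := by
      rw [← hρ₀b]; exact HKS.wulffR_subset_ball hWsub hρ₀.le x
    have hsub2 : wulffR F ρ₀ x₂ ⊆ Metric.closedBall x₂ (ε / 8) := by
      rw [← hρ₀b]; exact HKS.wulffR_subset_ball hWsub hρ₀.le x₂
    have hdisj : Disjoint (wulffR F ρ₀ x) (wulffR F ρ₀ x₂) := by
      refine (Metric.closedBall_disjoint_closedBall ?_).mono hsub1 hsub2
      rw [hdist]; linarith
    have hin1 : wulffR F ρ₀ x ⊆ Ω :=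
      hsub1.trans ((Metric.closedBall_subset_ball (by linarith)).trans hball)
    have hin2 : wulffR F ρ₀ x₂ ⊆ Ω := by
      refine hsub2.trans fun y hy => hball ?_
      rw [Metric.mem_closedBall] at hy
      have ht : dist y x ≤ dist y x₂ + dist x₂ x := dist_triangle _ _ _
      have hd2 : dist x₂ x = ε / 2 := by rw [dist_comm]; exact hdist
      rw [Metric.mem_ball]
      linarith
    exact lt_of_lt_of_le hρ₀ (le_csSup (hbdd Ω hΩfin) ⟨hρ₀, x, x₂, hdisj, hin1, hin2⟩)
  refine ⟨part1, ?_⟩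
  rintro r hr x₁ x₂ hd hvol1 hvol2
  have hv1 : (volume (wulffR F r x₁)).toReal = r ^ n * kappa F := by
    rw [HKS.wulffR_volume F hr.le, ENNReal.toReal_mul,
      ENNReal.toReal_ofReal (by positivity), hk]
  have hrn : r ^ n * kappa F = (volume Ω).toReal / 2 := by rw [← hv1]; exact hvol1
  have hM : (volume Ω).toReal / (2 * kappa F) = r ^ n := by
    rw [div_eq_iff (by positivity)]; linarith
  have hMr : ((volume Ω).toReal / (2 * kappa F)) ^ (1 / (n : ℝ)) = r := by
    rw [hM, ← Real.rpow_natCast r n, ← Real.rpow_mul hr.le, mul_one_div_cancel hn0,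
      Real.rpow_one]
  have h1 : rho2F F Ω ≤ r := hMr ▸ part1
  have hUfin : volume (wulffR F r x₁ ∪ wulffR F r x₂) ≠ ⊤ := by
    refine ne_top_of_le_ne_top ?_ (measure_union_le _ _)
    rw [HKS.wulffR_volume F hr.le, HKS.wulffR_volume F hr.le]
    exact ENNReal.add_ne_top.2 ⟨ENNReal.mul_ne_top ENNReal.ofReal_ne_top hWfin,
      ENNReal.mul_ne_top ENNReal.ofReal_ne_top hWfin⟩
  have h2 : r ≤ rho2F F (wulffR F r x₁ ∪ wulffR F r x₂) :=
    le_csSup (hbdd _ hUfin)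
      ⟨hr, x₁, x₂, hd, Set.subset_union_left, Set.subset_union_right⟩
  exact one_div_le_one_div_of_le hrho_pos (h1.trans h2)

end
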